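/- arXiv:2410.00834 — 5 statements merged into one kernel-verified Lean document; each statement's English description precedes it below -/
import Mathlib

section
/- Let σ, σ̄ : ℝ → ℝ be smooth functions with σ(u)² = σ̄(u)² for all u ∈ ℝ. Then for all k, l ∈ ℕ and all u ∈ ℝ one has σ^{(k)}(u) · σ^{(l)}(u) = σ̄^{(k)}(u) · σ̄^{(l)}(u). -/
open scoped ContDiff

open Finset in
lemma leibniz_iter (f g : ℝ → ℝ) (hf : ContDiff ℝ ∞ f) (hg : ContDiff ℝ ∞ g) (n : ℕ) :
    iteratedDeriv n (fun x => f x * g x) = fun x =>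
      ∑ i ∈ Finset.range (n + 1),
        (n.choose i : ℝ) * (iteratedDeriv i f x * iteratedDeriv (n - i) g x) := by
  have hdf : ∀ m, Differentiable ℝ (iteratedDeriv m f) := by
    intro m
    rw [iteratedDeriv_eq_iterate]
    exact (hf.iterate_deriv m).differentiable (by simp)
  have hdg : ∀ m, Differentiable ℝ (iteratedDeriv m g) := by
    intro m
    rw [iteratedDeriv_eq_iterate]
    exact (hg.iterate_deriv m).differentiable (by simp)
  induction n with
  | zero => simp
  | succ n ih =>
    rw [iteratedDeriv_succ, ih]
    funext x
    rw [deriv_fun_sum (fun i _ => by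
      exact (((hdf i).differentiableAt.mul (hdg (n-i)).differentiableAt).const_mul _))]
    have hterm : ∀ i ∈ Finset.range (n+1),
        deriv (fun x => (n.choose i : ℝ) *
          (iteratedDeriv i f x * iteratedDeriv (n - i) g x)) x =
        (n.choose i : ℝ) * (iteratedDeriv (i+1) f x * iteratedDeriv (n - i) g x)
        + (n.choose i : ℝ) * (iteratedDeriv i f x * iteratedDeriv (n - i + 1) g x) := by
      intro i _
      rw [deriv_const_mul (d := fun y => iteratedDeriv i f y * iteratedDeriv (n - i) g y) _ ((hdf i).differentiableAt.mul (hdg (n-i)).differentiableAt),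
        deriv_fun_mul (hdf i).differentiableAt (hdg (n-i)).differentiableAt,
        ← iteratedDeriv_succ, ← iteratedDeriv_succ]
      ring
    rw [Finset.sum_congr rfl hterm, Finset.sum_add_distrib]
    -- now Pascal rearrangement
    set a : ℕ → ℝ := fun i => iteratedDeriv i f x
    set b : ℕ → ℝ := fun i => iteratedDeriv i g x
    have h2 : ∀ i ∈ Finset.range (n+1),
        (n.choose i : ℝ) * (a i * b (n - i + 1)) = (n.choose i : ℝ) * (a i * b (n + 1 - i)) := by
      intro i hi
      rw [Finset.mem_range] at hi
      have : n - i + 1 = n + 1 - i := by omega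
      rw [this]
    rw [Finset.sum_congr rfl h2]
    rw [Finset.sum_range_succ' (fun i => ((n+1).choose i : ℝ) * (a i * b (n + 1 - i))) (n+1)]
    have h3 : ∀ i ∈ Finset.range (n+1),
        ((n+1).choose (i+1) : ℝ) * (a (i+1) * b (n + 1 - (i+1))) =
        (n.choose i : ℝ) * (a (i+1) * b (n - i)) + (n.choose (i+1) : ℝ) * (a (i+1) * b (n - i)) := by
      intro i hi
      have : (n+1).choose (i+1) = n.choose i + n.choose (i+1) := Nat.choose_succ_succ' n i ▸ rfl
      rw [show n + 1 - (i+1) = n - i by omega, this]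
      push_cast
      ring
    rw [Finset.sum_congr rfl h3, Finset.sum_add_distrib]
    have h4 : ∑ i ∈ Finset.range (n+1), (n.choose (i+1) : ℝ) * (a (i+1) * b (n - i))
        + ((n+1).choose 0 : ℝ) * (a 0 * b (n + 1 - 0))
        = ∑ i ∈ Finset.range (n+1), (n.choose i : ℝ) * (a i * b (n + 1 - i)) := by
      rw [Finset.sum_range_succ' (fun i => (n.choose i : ℝ) * (a i * b (n + 1 - i))) n,
        Finset.sum_range_succ (fun i => (n.choose (i+1) : ℝ) * (a (i+1) * b (n - i))) n,
        Nat.choose_succ_self]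
      have h5 : ∑ i ∈ Finset.range n, (n.choose (i+1) : ℝ) * (a (i+1) * b (n - i)) =
          ∑ i ∈ Finset.range n, (n.choose (i+1) : ℝ) * (a (i+1) * b (n + 1 - (i+1))) := by
        apply Finset.sum_congr rfl
        intro i hi
        rw [Finset.mem_range] at hi
        have : n - i = n + 1 - (i + 1) := by omega
        rw [this]
      rw [h5]
      push_cast
      simp
    rw [← h4]
    ring

open Finset in
lemma sign_lemma (a b : ℕ → ℝ)
    (H : ∀ n, ∑ i ∈ Finset.range (n + 1), (n.choose i : ℝ) * (a i * a (n - i)) =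
        ∑ i ∈ Finset.range (n + 1), (n.choose i : ℝ) * (b i * b (n - i))) :
    ∃ ε : ℝ, ε ^ 2 = 1 ∧ ∀ n, a n = ε * b n := by
  have sq : ∀ m, (∀ i, i < m → a i = 0) → (∀ i, i < m → b i = 0) → a m ^ 2 = b m ^ 2 := by
    intro m ha hb
    have hA := H (2 * m)
    have e1 : ∑ i ∈ Finset.range (2*m+1), ((2*m).choose i : ℝ) * (a i * a (2*m - i)) =
        ((2*m).choose m : ℝ) * (a m * a (2*m - m)) := by
      apply Finset.sum_eq_single_of_mem m (by rw [Finset.mem_range]; omega)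
      intro i hi hne
      rw [Finset.mem_range] at hi
      rcases lt_or_gt_of_ne hne with h' | h'
      · rw [ha i h']; ring
      · rw [ha (2*m - i) (by omega)]; ring
    have e2 : ∑ i ∈ Finset.range (2*m+1), ((2*m).choose i : ℝ) * (b i * b (2*m - i)) =
        ((2*m).choose m : ℝ) * (b m * b (2*m - m)) := by
      apply Finset.sum_eq_single_of_mem m (by rw [Finset.mem_range]; omega)
      intro i hi hne
      rw [Finset.mem_range] at hi
      rcases lt_or_gt_of_ne hne with h' | h'
      · rw [hb i h']; ring
      · rw [hb (2*m - i) (by omega)]; ring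
    rw [show 2 * m - m = m by omega] at e1 e2
    rw [e1, e2] at hA
    have hC : ((2*m).choose m : ℝ) ≠ 0 :=
      Nat.cast_ne_zero.mpr (Nat.choose_pos (by omega)).ne'
    have := mul_left_cancel₀ hC hA
    rw [pow_two, pow_two]
    exact this
  have hz : ∀ m, (∀ i, i < m → a i = 0) → (∀ i, i < m → b i = 0) := by
    intro m
    induction m with
    | zero => intro _ i hi; omega
    | succ m ih =>
      intro ha i hi
      have ham : ∀ j, j < m → a j = 0 := fun j hj => ha j (by omega)
      have hbm := ih ham
      rcases Nat.lt_succ_iff_lt_or_eq.mp hi with h' | h'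
      · exact hbm i h'
      · subst h'
        have hs := sq i ham hbm
        have : b i ^ 2 = 0 := by rw [← hs, ha i (by omega)]; ring
        exact pow_eq_zero_iff (n := 2) (by norm_num) |>.mp this
  by_cases hall : ∀ n, a n = 0
  · refine ⟨1, by norm_num, fun n => ?_⟩
    rw [hall n, hz (n+1) (fun i _ => hall i) n (by omega)]; ring
  · push_neg at hall
    set m := Nat.find hall with hmdef
    have hm : a m ≠ 0 := Nat.find_spec hall
    have hlt : ∀ i, i < m → a i = 0 := fun i hi => not_not.mp (Nat.find_min hall hi)
    have hbl : ∀ i, i < m → b i = 0 := hz m hlt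
    have hsq := sq m hlt hbl
    have hbm : b m ≠ 0 := by
      intro h0
      apply hm
      have : a m ^ 2 = 0 := by rw [hsq, h0]; ring
      exact pow_eq_zero_iff (n := 2) (by norm_num) |>.mp this
    have hε2 : (a m / b m) ^ 2 = 1 := by
      rw [div_pow, hsq, div_self (pow_ne_zero 2 hbm)]
    have main : ∀ r, a (m + r) = a m / b m * b (m + r) := by
      intro r
      induction r using Nat.strong_induction_on with
      | _ r ih =>
        rcases Nat.eq_zero_or_pos r with rfl | hr
        · field_simp; simp
        · set N := 2 * m + r with hNdef
          have hH := H N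
          have hzero : ∑ i ∈ Finset.range (N + 1),
              ((N.choose i : ℝ) * (a i * a (N - i)) - (N.choose i : ℝ) * (b i * b (N - i))) = 0 := by
            rw [Finset.sum_sub_distrib, hH, sub_self]
          have hsub : ({m, m + r} : Finset ℕ) ⊆ Finset.range (N + 1) := by
            intro x hx
            rw [Finset.mem_insert, Finset.mem_singleton] at hx
            rw [Finset.mem_range]
            rcases hx with rfl | rfl <;> omega
          have hvan : ∀ i ∈ Finset.range (N + 1), i ∉ ({m, m + r} : Finset ℕ) →
              (N.choose i : ℝ) * (a i * a (N - i)) - (N.choose i : ℝ) * (b i * b (N - i)) = 0 := by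
            intro i hi hnot
            rw [Finset.mem_range] at hi
            rw [Finset.mem_insert, Finset.mem_singleton] at hnot
            push_neg at hnot
            by_cases h1 : i < m
            · rw [hlt i h1, hbl i h1]; ring
            · by_cases h2 : m + r < i
              · rw [hlt (N - i) (by omega), hbl (N - i) (by omega)]; ring
              · have hi1 : m < i := by omega
                have hi2 : i < m + r := by omega
                have ha1 : a i = a m / b m * b i := by
                  have := ih (i - m) (by omega)
                  rwa [show m + (i - m) = i by omega] at this
                have ha2 : a (N - i) = a m / b m * b (N - i) := by
                  have := ih (r - (i - m)) (by omega)
                  rwa [show m + (r - (i - m)) = N - i by omega] at this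
                rw [ha1, ha2]
                linear_combination (N.choose i : ℝ) * b i * b (N - i) * hε2
          have hpair : ∑ i ∈ ({m, m + r} : Finset ℕ),
              ((N.choose i : ℝ) * (a i * a (N - i)) - (N.choose i : ℝ) * (b i * b (N - i))) = 0 := by
            rw [Finset.sum_subset hsub hvan]; exact hzero
          rw [Finset.sum_insert (by simp; omega), Finset.sum_singleton] at hpair
          rw [show N - m = m + r by omega, show N - (m + r) = m by omega] at hpair
          have hcc : N.choose (m + r) = N.choose m := by
            rw [← Nat.choose_symm (show m + r ≤ N by omega)]
            congr 1
            omega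
          rw [hcc] at hpair
          have hC : (N.choose m : ℝ) ≠ 0 :=
            Nat.cast_ne_zero.mpr (Nat.choose_pos (by omega)).ne'
          have hkey : a m * a (m + r) = b m * b (m + r) := by
            apply mul_left_cancel₀ (mul_ne_zero two_ne_zero hC)
            linear_combination hpair
          have hgoal : a (m + r) * b m = a m * b (m + r) :=
            mul_left_cancel₀ hm (by linear_combination b m * hkey - b (m + r) * hsq)
          rw [div_mul_eq_mul_div, eq_div_iff hbm]
          exact hgoal
    refine ⟨a m / b m, hε2, fun n => ?_⟩
    by_cases hn : n < m
    · rw [hlt n hn, hbl n hn]; ring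
    · have := main (n - m)
      rwa [show m + (n - m) = n by omega] at this

theorem stmt_0 (σ σb : ℝ → ℝ) (hσ : ContDiff ℝ (⊤ : ℕ∞) σ) (hσb : ContDiff ℝ (⊤ : ℕ∞) σb)
    (h : ∀ u : ℝ, σ u ^ 2 = σb u ^ 2) (k l : ℕ) (u : ℝ) :
    iteratedDeriv k σ u * iteratedDeriv l σ u =
      iteratedDeriv k σb u * iteratedDeriv l σb u := by
  have hσ' : ContDiff ℝ ∞ σ := hσ.of_le (by simp)
  have hσb' : ContDiff ℝ ∞ σb := hσb.of_le (by simp)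
  have hfun : (fun x => σ x * σ x) = fun x => σb x * σb x :=
    funext fun x => by linear_combination h x
  have H : ∀ n, ∑ i ∈ Finset.range (n + 1),
      (n.choose i : ℝ) * (iteratedDeriv i σ u * iteratedDeriv (n - i) σ u) =
      ∑ i ∈ Finset.range (n + 1),
      (n.choose i : ℝ) * (iteratedDeriv i σb u * iteratedDeriv (n - i) σb u) := by
    intro n
    calc ∑ i ∈ Finset.range (n + 1),
        (n.choose i : ℝ) * (iteratedDeriv i σ u * iteratedDeriv (n - i) σ u)
        = iteratedDeriv n (fun x => σ x * σ x) u :=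
          (congrFun (leibniz_iter σ σ hσ' hσ' n) u).symm
      _ = iteratedDeriv n (fun x => σb x * σb x) u := by rw [hfun]
      _ = _ := congrFun (leibniz_iter σb σb hσb' hσb' n) u
  obtain ⟨ε, hε, hab⟩ :=
    sign_lemma (fun n => iteratedDeriv n σ u) (fun n => iteratedDeriv n σb u) H
  have hk := hab k
  have hl := hab l
  rw [hk, hl]
  linear_combination (iteratedDeriv k σb u * iteratedDeriv l σb u) * hε
end

section
/- Let σ, σ̄ : ℝ → ℝ be smooth with σ² = σ̄². Then for any even number 2m of indices k₁, …, k_{2m} ∈ ℕ and any u ∈ ℝ, one has ∏_{i=1}^{2m} σ^{(k_i)}(u) = ∏_{i=1}^{2m} σ̄^{(k_i)}(u). -/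
open Finset

private lemma smooth_iter (f : ℝ → ℝ) (hf : ContDiff ℝ (⊤ : ℕ∞) f) (j : ℕ) :
    ContDiff ℝ (⊤ : ℕ∞) (iteratedDeriv j f) := by
  rw [iteratedDeriv_eq_iterate]
  exact hf.iterate_deriv j

private lemma diff_iter (f : ℝ → ℝ) (hf : ContDiff ℝ (⊤ : ℕ∞) f) (j : ℕ) (x : ℝ) :
    DifferentiableAt ℝ (iteratedDeriv j f) x :=
  (((smooth_iter f hf j).differentiable (by simp)).differentiableAt)

private lemma iter_add (f g : ℝ → ℝ) (hf : ContDiff ℝ (⊤ : ℕ∞) f)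
    (hg : ContDiff ℝ (⊤ : ℕ∞) g) (n : ℕ) :
    iteratedDeriv n (fun y => f y + g y) = fun x => iteratedDeriv n f x + iteratedDeriv n g x := by
  induction n with
  | zero => simp [iteratedDeriv_zero]
  | succ n ih =>
    rw [iteratedDeriv_succ, ih, iteratedDeriv_succ, iteratedDeriv_succ]
    funext x
    exact deriv_add (diff_iter f hf n x) (diff_iter g hg n x)

private lemma iter_zero (n : ℕ) (u : ℝ) : iteratedDeriv n (fun _ : ℝ => (0 : ℝ)) u = 0 := by
  induction n with
  | zero => simp
  | succ n ih =>
    rw [iteratedDeriv_succ']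
    simpa using ih

private lemma leibniz (f g : ℝ → ℝ) (hf : ContDiff ℝ (⊤ : ℕ∞) f)
    (hg : ContDiff ℝ (⊤ : ℕ∞) g) (n : ℕ) (x : ℝ) :
    iteratedDeriv n (fun y => f y * g y) x =
      ∑ j ∈ range (n + 1),
        (n.choose j : ℝ) * (iteratedDeriv j f x * iteratedDeriv (n - j) g x) := by
  induction n generalizing x with
  | zero => simp
  | succ n ih =>
    rw [iteratedDeriv_succ]
    have hcong : deriv (iteratedDeriv n fun y => f y * g y) x =
        deriv (fun y => ∑ j ∈ range (n + 1),
          (n.choose j : ℝ) * (iteratedDeriv j f y * iteratedDeriv (n - j) g y)) x := by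
      congr 1
      ext y
      exact ih y
    rw [hcong]
    rw [deriv_fun_sum (fun j _ => (((diff_iter f hf j x).fun_mul (diff_iter g hg (n - j) x)).const_mul _))]
    have hterm : ∀ j ∈ range (n + 1),
        deriv (fun y => (n.choose j : ℝ) *
          (iteratedDeriv j f y * iteratedDeriv (n - j) g y)) x =
        (n.choose j : ℝ) * (iteratedDeriv (j + 1) f x * iteratedDeriv (n - j) g x) +
        (n.choose j : ℝ) * (iteratedDeriv j f x * iteratedDeriv (n + 1 - j) g x) := by
      intro j hj
      rw [deriv_const_mul _ ((diff_iter f hf j x).fun_mul (diff_iter g hg (n - j) x)),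
        deriv_fun_mul (diff_iter f hf j x) (diff_iter g hg (n - j) x),
        ← iteratedDeriv_succ, ← iteratedDeriv_succ]
      have : n - j + 1 = n + 1 - j := by
        simp only [Finset.mem_range] at hj; omega
      rw [this]
      ring
    rw [Finset.sum_congr rfl hterm, Finset.sum_add_distrib]
    -- Binomial reshuffle
    have hB : (∑ j ∈ range (n + 1),
          (n.choose (j + 1) : ℝ) * (iteratedDeriv (j + 1) f x * iteratedDeriv (n - j) g x)) +
        ((n.choose 0 : ℝ)) * (iteratedDeriv 0 f x * iteratedDeriv (n + 1) g x) =
        ∑ j ∈ range (n + 1),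
          (n.choose j : ℝ) * (iteratedDeriv j f x * iteratedDeriv (n + 1 - j) g x) := by
      rw [Finset.sum_range_succ, Finset.sum_range_succ' (fun j =>
        (n.choose j : ℝ) * (iteratedDeriv j f x * iteratedDeriv (n + 1 - j) g x)) n]
      have e1 : ∀ j ∈ range n,
          (n.choose (j + 1) : ℝ) *
            (iteratedDeriv (j + 1) f x * iteratedDeriv (n + 1 - (j + 1)) g x) =
          (n.choose (j + 1) : ℝ) *
            (iteratedDeriv (j + 1) f x * iteratedDeriv (n - j) g x) := by
        intro j hj
        congr 3
        omega
      rw [Finset.sum_congr rfl e1]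
      simp [Nat.choose_succ_self]
    rw [Finset.sum_range_succ' (fun j =>
      ((n + 1).choose j : ℝ) * (iteratedDeriv j f x * iteratedDeriv (n + 1 - j) g x)) (n + 1)]
    have hch : ∀ j ∈ range (n + 1),
        ((n + 1).choose (j + 1) : ℝ) *
          (iteratedDeriv (j + 1) f x * iteratedDeriv (n + 1 - (j + 1)) g x) =
        (n.choose j : ℝ) * (iteratedDeriv (j + 1) f x * iteratedDeriv (n - j) g x) +
        (n.choose (j + 1) : ℝ) * (iteratedDeriv (j + 1) f x * iteratedDeriv (n - j) g x) := by
      intro j _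
      have h1 : n + 1 - (j + 1) = n - j := by omega
      rw [h1, Nat.choose_succ_succ]
      push_cast
      ring
    rw [Finset.sum_congr rfl hch, Finset.sum_add_distrib]
    simp only [Nat.choose_zero_right, Nat.cast_one, Nat.sub_zero, Nat.add_sub_cancel,
      one_mul] at hB ⊢
    linarith [hB]

/-- Dichotomy: if `f * g ≡ 0` for smooth `f g`, then at every point all derivatives of `f`
vanish or all derivatives of `g` vanish. -/
private lemma dichotomy (f g : ℝ → ℝ) (hf : ContDiff ℝ (⊤ : ℕ∞) f)
    (hg : ContDiff ℝ (⊤ : ℕ∞) g) (hfg : ∀ x, f x * g x = 0) (u : ℝ) :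
    (∀ n, iteratedDeriv n f u = 0) ∨ (∀ n, iteratedDeriv n g u = 0) := by
  by_contra hc
  push_neg at hc
  obtain ⟨⟨a, ha⟩, ⟨b, hb⟩⟩ := hc
  have hea : ∃ a, iteratedDeriv a f u ≠ 0 := ⟨a, ha⟩
  have heb : ∃ b, iteratedDeriv b g u ≠ 0 := ⟨b, hb⟩
  set A := Nat.find hea with hA
  set B := Nat.find heb with hB
  have hAne : iteratedDeriv A f u ≠ 0 := Nat.find_spec hea
  have hBne : iteratedDeriv B g u ≠ 0 := Nat.find_spec heb
  have hAlt : ∀ j < A, iteratedDeriv j f u = 0 := fun j hj => by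
    by_contra hx; exact (not_le.mpr hj) (Nat.find_le hx)
  have hBlt : ∀ j < B, iteratedDeriv j g u = 0 := fun j hj => by
    by_contra hx; exact (not_le.mpr hj) (Nat.find_le hx)
  have hzero : iteratedDeriv (A + B) (fun y => f y * g y) u = 0 := by
    have : (fun y => f y * g y) = fun _ => (0 : ℝ) := funext hfg
    rw [this]
    exact iter_zero _ _
  rw [leibniz f g hf hg (A + B) u] at hzero
  have hsum : ∀ j ∈ range (A + B + 1), j ≠ A →
      ((A + B).choose j : ℝ) * (iteratedDeriv j f u * iteratedDeriv (A + B - j) g u) = 0 := by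
    intro j hj hne
    rcases lt_or_gt_of_ne hne with hlt | hgt
    · rw [hAlt j hlt]; ring
    · have : A + B - j < B := by
        simp only [Finset.mem_range] at hj; omega
      rw [hBlt _ this]; ring
  rw [Finset.sum_eq_single_of_mem A (by simp only [Finset.mem_range]; omega) hsum] at hzero
  have hAB : A + B - A = B := by omega
  rw [hAB] at hzero
  have hchoose : ((A + B).choose A : ℝ) ≠ 0 :=
    Nat.cast_ne_zero.mpr (Nat.choose_pos (Nat.le_add_right A B)).ne'
  rcases mul_eq_zero.mp hzero with h1 | h2
  · exact hchoose h1
  · rcases mul_eq_zero.mp h2 with h3 | h4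
    · exact hAne h3
    · exact hBne h4

theorem stmt_1 (σ σb : ℝ → ℝ) (hσ : ContDiff ℝ (⊤ : ℕ∞) σ) (hσb : ContDiff ℝ (⊤ : ℕ∞) σb)
    (h : ∀ u : ℝ, σ u ^ 2 = σb u ^ 2) (m : ℕ) (k : Fin (2 * m) → ℕ) (u : ℝ) :
    ∏ i, iteratedDeriv (k i) σ u = ∏ i, iteratedDeriv (k i) σb u := by
  have hσ' : ContDiff ℝ (⊤ : ℕ∞) σ := hσ.of_le (by simp)
  have hσb' : ContDiff ℝ (⊤ : ℕ∞) σb := hσb.of_le (by simp)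
  have hσbn : ContDiff ℝ (⊤ : ℕ∞) (fun y => -σb y) := hσb'.neg
  have hf : ContDiff ℝ (⊤ : ℕ∞) (fun y => σ y + -σb y) := hσ'.add hσbn
  have hg : ContDiff ℝ (⊤ : ℕ∞) (fun y => σ y + σb y) := hσ'.add hσb'
  have hfg : ∀ x, (σ x + -σb x) * (σ x + σb x) = 0 := by
    intro x
    nlinarith [h x]
  rcases dichotomy _ _ hf hg hfg u with hd | hd
  · have heq : ∀ n, iteratedDeriv n σ u = iteratedDeriv n σb u := by
      intro n
      have := hd n
      rw [iter_add σ (fun y => -σb y) hσ' hσbn n] at this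
      have h2 : iteratedDeriv n σ u + iteratedDeriv n (fun y => -σb y) u = 0 := this
      rw [iteratedDeriv_fun_neg n σb u] at h2
      linarith [h2]
    exact Finset.prod_congr rfl fun i _ => heq (k i)
  · have heq : ∀ n, iteratedDeriv n σ u = -iteratedDeriv n σb u := by
      intro n
      have := hd n
      rw [iter_add σ σb hσ' hσb' n] at this
      have h2 : iteratedDeriv n σ u + iteratedDeriv n σb u = 0 := this
      linarith [h2]
    calc ∏ i, iteratedDeriv (k i) σ u = ∏ i, (-1 : ℝ) * iteratedDeriv (k i) σb u := by
          refine Finset.prod_congr rfl fun i _ => ?_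
          rw [heq (k i)]; ring
      _ = (∏ _i : Fin (2 * m), (-1 : ℝ)) * ∏ i, iteratedDeriv (k i) σb u :=
          Finset.prod_mul_distrib
      _ = ∏ i, iteratedDeriv (k i) σb u := by
          rw [Finset.prod_const]
          simp [pow_mul]
end

section
/- Let Λ be a finite set of finitely supported functions β : ℕ × {0,1,2} → ℕ and let (λ_β)_{β ∈ Λ} be real numbers. For smooth functions h, Γ, σ : ℝ → ℝ define Υ^h_{Γ,σ}(β)(u) = ∏_{k≥0} (h^{(k)}(u))^{β(k,0)} · (2Γ^{(k)}(u))^{β(k,1)} · (σ^{(k)}(u))^{β(k,2)}. If Σ_{β∈Λ} λ_β Υ^h_{Γ,σ}(β)(u) = 0 for every u ∈ ℝ and every choice of smooth h, Γ, σ, then λ_β = 0 for all β ∈ Λ. -/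
/-- The elementary differential (evaluation) map on extended multi-indices
`β : ℕ × {h, Γ, σ} → ℕ` (finitely supported):
`Υ^h_{Γ,σ}(β)(u) = ∏_k (h^{(k)}(u))^{β(k,0)} (2Γ^{(k)}(u))^{β(k,1)} (σ^{(k)}(u))^{β(k,2)}`. -/
noncomputable def Upsilon (h Γ s : ℝ → ℝ) (β : (ℕ × Fin 3) →₀ ℕ) (u : ℝ) : ℝ :=
  β.prod fun p n =>
    (if p.2 = 0 then iteratedDeriv p.1 h u
     else if p.2 = 1 then 2 * iteratedDeriv p.1 Γ u
     else iteratedDeriv p.1 s u) ^ n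

/-- Polynomial with `k`-th Taylor coefficient `a k` for `k < N`. -/
noncomputable def taylorPoly (a : ℕ → ℝ) (N : ℕ) : Polynomial ℝ :=
  ∑ k ∈ Finset.range N, Polynomial.C (a k / k.factorial) * Polynomial.X ^ k

lemma contDiff_polyeval (p : Polynomial ℝ) : ContDiff ℝ (⊤ : ℕ∞) fun x : ℝ => p.eval x := by
  induction p using Polynomial.induction_on' with
  | add p q hp hq => simpa using hp.add hq
  | monomial n a =>
      simpa [Polynomial.eval_monomial] using
        (contDiff_const (c := a)).mul (contDiff_id.pow n)

lemma iteratedDeriv_polyeval (k : ℕ) (p : Polynomial ℝ) (x : ℝ) :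
    iteratedDeriv k (fun y : ℝ => p.eval y) x
      = (Polynomial.derivative^[k] p).eval x := by
  induction k generalizing p x with
  | zero => simp
  | succ k ih =>
      rw [iteratedDeriv_succ', Function.iterate_succ_apply]
      have : deriv (fun y : ℝ => p.eval y) = fun y : ℝ => (Polynomial.derivative p).eval y := by
        funext y; exact Polynomial.deriv (p := p)
      rw [this, ih]

lemma taylorPoly_coeff (a : ℕ → ℝ) (N k : ℕ) (hk : k < N) :
    (taylorPoly a N).coeff k = a k / k.factorial := by
  rw [taylorPoly, Polynomial.finset_sum_coeff]
  rw [Finset.sum_eq_single k]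
  · simp
  · intro j _ hj
    simp [Polynomial.coeff_C_mul, Polynomial.coeff_X_pow, Ne.symm hj]
  · intro h; exact absurd (Finset.mem_range.2 hk) h

lemma iteratedDeriv_taylorPoly (a : ℕ → ℝ) (N k : ℕ) (hk : k < N) :
    iteratedDeriv k (fun y : ℝ => (taylorPoly a N).eval y) 0 = a k := by
  rw [iteratedDeriv_polyeval, ← Polynomial.coeff_zero_eq_eval_zero,
    Polynomial.coeff_iterate_derivative, zero_add, taylorPoly_coeff a N k hk,
    Nat.descFactorial_self, nsmul_eq_mul]
  field_simp

theorem stmt_2 (Λ : Finset ((ℕ × Fin 3) →₀ ℕ)) (lam : ((ℕ × Fin 3) →₀ ℕ) → ℝ)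
    (H : ∀ h Γ s : ℝ → ℝ, ContDiff ℝ (⊤ : ℕ∞) h → ContDiff ℝ (⊤ : ℕ∞) Γ → ContDiff ℝ (⊤ : ℕ∞) s →
      ∀ u : ℝ, ∑ β ∈ Λ, lam β * Upsilon h Γ s β u = 0) :
    ∀ β ∈ Λ, lam β = 0 := by
  intro β₀ hβ₀
  set N : ℕ := (Λ.sup fun β => β.support.sup fun p => p.1) + 1 with hN
  -- key evaluation identity
  have key : ∀ c : (ℕ × Fin 3) → ℝ,
      ∑ β ∈ Λ, lam β * (β.prod fun p n => c p ^ n) = 0 := by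
    intro c
    have h0 := H (fun y => (taylorPoly (fun k => c (k, 0)) N).eval y)
      (fun y => (taylorPoly (fun k => c (k, 1) / 2) N).eval y)
      (fun y => (taylorPoly (fun k => c (k, 2)) N).eval y)
      (contDiff_polyeval _) (contDiff_polyeval _) (contDiff_polyeval _) 0
    rw [← h0]
    refine Finset.sum_congr rfl fun β hβ => ?_
    congr 1
    rw [Upsilon]
    refine (Finsupp.prod_congr fun p hp => ?_).symm
    have hp1 : p.1 < N := by
      have h1 : p.1 ≤ β.support.sup fun q => q.1 := Finset.le_sup hp
      have h2 : (β.support.sup fun q => q.1) ≤ Λ.sup fun β => β.support.sup fun q => q.1 :=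
        Finset.le_sup (f := fun β => β.support.sup fun q => q.1) hβ
      omega
    congr 1
    have h2 : p.2.val = 0 ∨ p.2.val = 1 ∨ p.2.val = 2 := by
      have := p.2.isLt; omega
    rcases h2 with h2 | h2 | h2
    · have h0' : p.2 = 0 := Fin.ext h2
      have hcp : c p = c (p.1, 0) := by rw [← h0']
      rw [if_pos h0', hcp]
      exact iteratedDeriv_taylorPoly (fun k => c (k, 0)) N p.1 hp1
    · have h1' : p.2 = 1 := Fin.ext h2
      have hcp : c p = c (p.1, 1) := by rw [← h1']
      rw [if_neg (by rw [h1']; decide), if_pos h1', hcp,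
        iteratedDeriv_taylorPoly (fun k => c (k, 1) / 2) N p.1 hp1]
      ring
    · have h2' : p.2 = 2 := Fin.ext h2
      have hcp : c p = c (p.1, 2) := by rw [← h2']
      rw [if_neg (by rw [h2']; decide), if_neg (by rw [h2']; decide), hcp]
      exact iteratedDeriv_taylorPoly (fun k => c (k, 2)) N p.1 hp1
  -- package as an MvPolynomial identity
  set P : MvPolynomial (ℕ × Fin 3) ℝ := ∑ β ∈ Λ, MvPolynomial.monomial β (lam β) with hP
  have hPzero : P = 0 := by
    apply MvPolynomial.funext
    intro c
    rw [hP, map_sum]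
    simpa [MvPolynomial.eval_monomial] using key c
  have := congrArg (MvPolynomial.coeff β₀) hPzero
  rw [hP, MvPolynomial.coeff_sum] at this
  simp only [MvPolynomial.coeff_monomial, MvPolynomial.coeff_zero] at this
  rwa [Finset.sum_ite_eq' Λ β₀ lam, if_pos hβ₀] at this
end

section
/- For N ≥ 2, the number of finitely supported functions β : ℕ → ℕ satisfying Σ_k β(k) = N and Σ_k k·β(k) = N − 1 equals p(N−1), the number of partitions of the integer N − 1. -/
private lemma sum_toMultiset (f : ℕ →₀ ℕ) :
    (Finsupp.toMultiset f).sum = f.sum fun k n => k * n := by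
  rw [Finsupp.toMultiset_apply, Finsupp.sum, Finsupp.sum, Multiset.sum_sum]
  refine Finset.sum_congr rfl fun k _ => ?_
  simp [Multiset.sum_nsmul, mul_comm]

private lemma sum_split (β : ℕ →₀ ℕ) (g : ℕ → ℕ → ℕ)
    (h0 : ∀ k, g k 0 = 0) (hadd : ∀ k a b, g k (a + b) = g k a + g k b) :
    β.sum g = g 0 (β 0) + (β.erase 0).sum g := by
  conv_lhs => rw [← Finsupp.single_add_erase 0 β]
  rw [Finsupp.sum_add_index' h0 hadd, Finsupp.sum_single_index (h0 0)]

theorem stmt_10 (N : ℕ) (hN : 2 ≤ N) :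
    {β : ℕ →₀ ℕ | (β.sum fun _ n => n) = N ∧ (β.sum fun k n => k * n) = N - 1}.ncard =
      Fintype.card (Nat.Partition (N - 1)) := by
  classical
  have e : {β : ℕ →₀ ℕ // (β.sum fun _ n => n) = N ∧ (β.sum fun k n => k * n) = N - 1} ≃
      Nat.Partition (N - 1) := by
    refine
      { toFun := fun ⟨β, h1, h2⟩ =>
          { parts := Finsupp.toMultiset (β.erase 0)
            parts_pos := fun hi => ?_
            parts_sum := ?_ }
        invFun := fun p =>
          ⟨Multiset.toFinsupp p.parts + Finsupp.single 0 (N - Multiset.card p.parts), ?_, ?_⟩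
        left_inv := ?_
        right_inv := ?_ }
    · -- parts_pos
      rename_i i
      rw [Finsupp.mem_toMultiset, Finsupp.support_erase, Finset.mem_erase] at hi
      exact Nat.pos_of_ne_zero hi.1
    · -- parts_sum
      have := sum_split β (fun k n => k * n) (fun k => by simp) (fun k a b => Nat.mul_add k a b)
      rw [h2] at this
      beta_reduce at this
      rw [sum_toMultiset]
      omega
    · -- invFun sum of values = N
      have hcard : Multiset.card p.parts ≤ N := by
        have h1 : Multiset.card p.parts • 1 ≤ p.parts.sum :=
          Multiset.card_nsmul_le_sum fun x hx => p.parts_pos hx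
        rw [smul_eq_mul, mul_one, p.parts_sum] at h1
        omega
      rw [Finsupp.sum_add_index' (fun _ => rfl) (fun _ a b => rfl)]
      have : (Multiset.toFinsupp p.parts).sum (fun _ n => n) = Multiset.card p.parts :=
        Multiset.toFinsupp_sum_eq p.parts
      rw [this, Finsupp.sum_single_index rfl]
      omega
    · -- invFun weighted sum = N - 1
      rw [Finsupp.sum_add_index' (fun k => by simp) (fun k a b => Nat.mul_add k a b),
        Finsupp.sum_single_index (by simp), Nat.zero_mul, Nat.add_zero,
        ← sum_toMultiset, Multiset.toFinsupp_toMultiset, p.parts_sum]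
    · -- left_inv
      rintro ⟨β, h1, h2⟩
      have hs := sum_split β (fun _ n => n) (fun _ => rfl) (fun _ a b => rfl)
      rw [h1] at hs
      beta_reduce at hs
      have hcard : Multiset.card (Finsupp.toMultiset (β.erase 0)) = N - β 0 := by
        rw [Finsupp.card_toMultiset]
        simp only [Function.id_def]
        omega
      ext k
      simp only
      rw [Finsupp.toMultiset_toFinsupp, hcard]
      have h' : N - (N - β 0) = β 0 := by omega
      rw [h', Finsupp.erase_add_single]
    · -- right_inv
      rintro ⟨parts, hpos, hsum⟩
      ext1
      simp only
      have h0 : Multiset.toFinsupp parts 0 = 0 := by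
        rw [Multiset.toFinsupp_apply, Multiset.count_eq_zero]
        intro h
        exact absurd (hpos h) (lt_irrefl 0)
      rw [Finsupp.erase_add, Finsupp.erase_single, add_zero,
        Finsupp.erase_of_notMem_support, Multiset.toFinsupp_toMultiset]
      rw [Finsupp.mem_support_iff]
      simp [h0]
  calc {β : ℕ →₀ ℕ | (β.sum fun _ n => n) = N ∧ (β.sum fun k n => k * n) = N - 1}.ncard
      = Nat.card {β : ℕ →₀ ℕ // (β.sum fun _ n => n) = N ∧ (β.sum fun k n => k * n) = N - 1} :=
        rfl
    _ = Nat.card (Nat.Partition (N - 1)) := Nat.card_congr e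
    _ = Fintype.card (Nat.Partition (N - 1)) := Nat.card_eq_fintype_card
end

section
/- Let β : ℕ × {0,1} → ℕ be finitely supported with Σ_k β(k,0) odd, where β(k,0) counts σ-variables and β(k,1) counts Γ-variables. Then there exist smooth functions σ, σ̄, Γ : ℝ → ℝ with σ² = σ̄² such that ∏_{k≥0} (2Γ^{(k)}(0))^{β(k,1)} · (σ^{(k)}(0))^{β(k,0)} ≠ ∏_{k≥0} (2Γ^{(k)}(0))^{β(k,1)} · (σ̄^{(k)}(0))^{β(k,0)}. -/
lemma iteratedDeriv_exp (k : ℕ) : iteratedDeriv k Real.exp = Real.exp := by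
  induction k with
  | zero => simp
  | succ n ih => rw [iteratedDeriv_succ, ih, Real.deriv_exp]

lemma iteratedDeriv_neg_exp (k : ℕ) :
    iteratedDeriv k (fun x => -Real.exp x) = fun x => -Real.exp x := by
  ext x
  rw [iteratedDeriv_fun_neg, iteratedDeriv_exp]

theorem stmt_15 (βσ βΓ : ℕ →₀ ℕ) (hodd : Odd (βσ.sum fun _ n => n)) :
    ∃ σ σb Γ : ℝ → ℝ, ContDiff ℝ (⊤ : ℕ∞) σ ∧ ContDiff ℝ (⊤ : ℕ∞) σb ∧ ContDiff ℝ (⊤ : ℕ∞) Γ ∧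
      (∀ u : ℝ, σ u ^ 2 = σb u ^ 2) ∧
      (∏ᶠ k : ℕ, (2 * iteratedDeriv k Γ 0) ^ βΓ k * (iteratedDeriv k σ 0) ^ βσ k) ≠
      (∏ᶠ k : ℕ, (2 * iteratedDeriv k Γ 0) ^ βΓ k * (iteratedDeriv k σb 0) ^ βσ k) := by
  refine ⟨Real.exp, fun x => -Real.exp x, Real.exp, Real.contDiff_exp,
    Real.contDiff_exp.neg, Real.contDiff_exp, fun u => by ring, ?_⟩
  have h1 : ∀ k, iteratedDeriv k Real.exp 0 = 1 := fun k => by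
    rw [iteratedDeriv_exp]; exact Real.exp_zero
  have h2 : ∀ k, iteratedDeriv k (fun x => -Real.exp x) 0 = -1 := fun k => by
    rw [iteratedDeriv_neg_exp]; simp
  simp only [h1, h2]
  set s : Finset ℕ := βΓ.support ∪ βσ.support with hs
  have hsubΓ : βΓ.support ⊆ s := Finset.subset_union_left
  have hsubσ : βσ.support ⊆ s := Finset.subset_union_right
  have hout : ∀ k ∉ s, βΓ k = 0 ∧ βσ k = 0 := by
    intro k hk
    constructor <;> by_contra h
    · exact hk (hsubΓ (Finsupp.mem_support_iff.2 h))
    · exact hk (hsubσ (Finsupp.mem_support_iff.2 h))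
  have hL : (∏ᶠ k : ℕ, (2 * (1:ℝ)) ^ βΓ k * (1:ℝ) ^ βσ k)
      = ∏ k ∈ s, (2 * (1:ℝ)) ^ βΓ k * (1:ℝ) ^ βσ k := by
    apply finprod_eq_prod_of_mulSupport_subset
    intro k hk
    by_contra hks
    obtain ⟨hΓ0, hσ0⟩ := hout k hks
    simp [hΓ0, hσ0] at hk
  have hR : (∏ᶠ k : ℕ, (2 * (1:ℝ)) ^ βΓ k * (-1:ℝ) ^ βσ k)
      = ∏ k ∈ s, (2 * (1:ℝ)) ^ βΓ k * (-1:ℝ) ^ βσ k := by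
    apply finprod_eq_prod_of_mulSupport_subset
    intro k hk
    by_contra hks
    obtain ⟨hΓ0, hσ0⟩ := hout k hks
    simp [hΓ0, hσ0] at hk
  rw [hL, hR]
  have hsign : (∏ k ∈ s, (-1:ℝ) ^ βσ k) = -1 := by
    rw [Finset.prod_pow_eq_pow_sum]
    have : ∑ k ∈ s, βσ k = βσ.sum fun _ n => n := by
      rw [Finsupp.sum]
      exact (Finset.sum_subset hsubσ (fun k _ hk => by
        simpa using Finsupp.notMem_support_iff.1 hk)).symm
    rw [this, hodd.neg_one_pow]
  have hfact : (∏ k ∈ s, (2 * (1:ℝ)) ^ βΓ k * (-1:ℝ) ^ βσ k)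
      = (∏ k ∈ s, (2 * (1:ℝ)) ^ βΓ k * (1:ℝ) ^ βσ k) * (∏ k ∈ s, (-1:ℝ) ^ βσ k) := by
    rw [← Finset.prod_mul_distrib]
    apply Finset.prod_congr rfl
    intro k _; ring
  rw [hfact, hsign]
  have hpos : (0:ℝ) < ∏ k ∈ s, (2 * (1:ℝ)) ^ βΓ k * (1:ℝ) ^ βσ k := by
    apply Finset.prod_pos
    intro k _; positivity
  intro h
  nlinarith
end
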